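/- Let (A, [·,·], ρ) be a Lie-Rinehart algebra over O, let Õ be a commutative unital K-algebra with an algebra morphism η : O → Õ (so Õ is an O-algebra), and suppose given a map ρ̃ : A → Der_K(Õ) which is O-linear (ρ̃(f·a) = η(f)·ρ̃(a) for f ∈ O, a ∈ A), is a morphism of Lie algebras (ρ̃([a,b]) = [ρ̃(a), ρ̃(b)]), and extends ρ in the sense that ρ̃(a)(η(f)) = η(ρ(a)(f)) for all a ∈ A, f ∈ O. Then the Õ-module Õ ⊗_O A carries a structure of Lie-Rinehart algebra over Õ whose bracket is well defined by the formula [g ⊗ a, h ⊗ b] = (g h) ⊗ [a, b] + (g·ρ̃(a)(h)) ⊗ b − (h·ρ̃(b)(g)) ⊗ a and whose anchor is ρ'(g ⊗ a) = g·ρ̃(a); this bracket satisfies the Jacobi identity and the Leibniz identity with respect to ρ', ρ' is Õ-linear and a Lie algebra morphism, and a ↦ 1 ⊗ a is a Lie algebra morphism from A to Õ ⊗_O A compatible with η and the anchors. -/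
import Mathlib

open TensorProduct
set_option linter.unusedSectionVars false
set_option maxHeartbeats 3000000

structure LieRinehart (K O A : Type*) [Field K] [CharZero K] [CommRing O] [Algebra K O]
    [AddCommGroup A] [Module K A] [Module O A] [IsScalarTower K O A] where
  bracket : A →ₗ[K] A →ₗ[K] A
  anchor : A →ₗ[O] Derivation K O O
  antisymm : ∀ a b : A, bracket a b = - bracket b a
  jacobi : ∀ a b c : A,
    bracket a (bracket b c) = bracket (bracket a b) c + bracket b (bracket a c)
  anchor_bracket : ∀ a b : A, anchor (bracket a b) = ⁅anchor a, anchor b⁆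
  leibniz : ∀ (a b : A) (f : O),
    bracket a (f • b) = f • bracket a b + (anchor a) f • b

section Aux

variable {K O A : Type*} [Field K] [CharZero K] [CommRing O] [Algebra K O]
    [AddCommGroup A] [Module K A] [Module O A] [IsScalarTower K O A]
    (L : LieRinehart K O A)
    {Ot : Type*} [CommRing Ot] [Algebra K Ot] [Algebra O Ot] [IsScalarTower K O Ot]
    (ρt : A → Derivation K Ot Ot)
    (hadd : ∀ a b : A, ρt (a + b) = ρt a + ρt b)
    (hOlin : ∀ (f : O) (a : A), ρt (f • a) = algebraMap O Ot f • ρt a)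
    (hLie : ∀ a b : A, ρt (L.bracket a b) = ⁅ρt a, ρt b⁆)
    (hext : ∀ (a : A) (f : O), ρt a (algebraMap O Ot f) = algebraMap O Ot (L.anchor a f))

include hadd in
lemma rt_zero : ρt 0 = 0 := by
  have h := hadd 0 0
  rw [add_zero] at h
  exact left_eq_add.mp h

include hext in
lemma rt_algmul (a : A) (f : O) (h : Ot) :
    ρt a (algebraMap O Ot f * h)
      = algebraMap O Ot f * ρt a h + h * algebraMap O Ot (L.anchor a f) := by
  rw [Derivation.leibniz, hext, smul_eq_mul, smul_eq_mul]

lemma br_smul_left (f : O) (a b : A) :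
    L.bracket (f • a) b = f • L.bracket a b - (L.anchor b f) • a := by
  rw [L.antisymm (f • a) b, L.leibniz, L.antisymm b a]
  module

/-- the anchor as an additive map -/
noncomputable def anAdd : Ot ⊗[O] A →+ Derivation K Ot Ot :=
  TensorProduct.liftAddHom
    (AddMonoidHom.mk'
      (fun g => AddMonoidHom.mk' (fun a => g • ρt a) (fun a b => by
        simp only [hadd, smul_add]))
      (fun g g' => by ext a; simp [add_smul]))
    (fun f g a => by
      simp only [AddMonoidHom.mk'_apply, hOlin, Algebra.smul_def, mul_smul]
      rw [smul_comm])

@[simp] lemma anAdd_tmul (g : Ot) (a : A) :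
    anAdd ρt hadd hOlin (g ⊗ₜ[O] a) = g • ρt a := rfl

/-- the anchor as an `Ot`-linear map -/
noncomputable def an : Ot ⊗[O] A →ₗ[Ot] Derivation K Ot Ot where
  toFun := anAdd ρt hadd hOlin
  map_add' := map_add _
  map_smul' := fun g x => by
    induction x using TensorProduct.induction_on with
    | zero => simp
    | tmul h b =>
        rw [smul_tmul']
        show anAdd ρt hadd hOlin ((g • h) ⊗ₜ[O] b) = g • anAdd ρt hadd hOlin (h ⊗ₜ[O] b)
        rw [smul_eq_mul, anAdd_tmul, anAdd_tmul, mul_smul]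
    | add x y hx hy => simp only [smul_add, map_add, RingHom.id_apply] at hx hy ⊢; rw [hx, hy]

@[simp] lemma an_tmul (g : Ot) (a : A) :
    an ρt hadd hOlin (g ⊗ₜ[O] a) = g • ρt a := rfl


include hOlin hext in
lemma inner_balance (g : Ot) (a : A) (f : O) (h : Ot) (b : A) :
    (g * (f • h)) ⊗ₜ[O] L.bracket a b + (g * ρt a (f • h)) ⊗ₜ[O] b
        - ((f • h) * ρt b g) ⊗ₜ[O] a
      = (g * h) ⊗ₜ[O] L.bracket a (f • b) + (g * ρt a h) ⊗ₜ[O] (f • b)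
        - (h * ρt (f • b) g) ⊗ₜ[O] a := by
  rw [L.leibniz]
  simp only [hOlin, Derivation.smul_apply, smul_eq_mul, Algebra.smul_def,
    rt_algmul L ρt hext, tmul_add, tmul_smul, smul_tmul', mul_add, add_tmul]
  ring_nf
  abel

/-- inner bracket map for a fixed pure tensor `g ⊗ a` -/
noncomputable def brInner (g : Ot) (a : A) : Ot ⊗[O] A →+ Ot ⊗[O] A :=
  TensorProduct.liftAddHom
    (AddMonoidHom.mk'
      (fun h => AddMonoidHom.mk'
        (fun b => (g * h) ⊗ₜ[O] L.bracket a b + (g * ρt a h) ⊗ₜ[O] b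
                    - (h * ρt b g) ⊗ₜ[O] a)
        (fun b b' => by
          simp only [map_add, hadd, Derivation.add_apply, tmul_add, add_tmul, mul_add]
          abel))
      (fun h h' => by
        ext b
        simp only [AddMonoidHom.mk'_apply, AddMonoidHom.add_apply, map_add, mul_add,
          tmul_add, add_tmul, add_mul]
        abel))
    (fun f h b => by
      simp only [AddMonoidHom.mk'_apply]
      exact inner_balance L ρt hOlin hext g a f h b)

@[simp] lemma brInner_tmul (g : Ot) (a : A) (h : Ot) (b : A) :
    brInner L ρt hadd hOlin hext g a (h ⊗ₜ[O] b)
      = (g * h) ⊗ₜ[O] L.bracket a b + (g * ρt a h) ⊗ₜ[O] b - (h * ρt b g) ⊗ₜ[O] a := rfl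

lemma brInner_add_left (g g' : Ot) (a : A) (x : Ot ⊗[O] A) :
    brInner L ρt hadd hOlin hext (g + g') a x
      = brInner L ρt hadd hOlin hext g a x + brInner L ρt hadd hOlin hext g' a x := by
  induction x using TensorProduct.induction_on with
  | zero => simp
  | tmul h b =>
      simp only [brInner_tmul, add_mul, mul_add, map_add, Derivation.add_apply,
        add_tmul, tmul_add]
      abel
  | add x y hx hy => simp only [map_add, hx, hy]; abel

lemma brInner_add_mid (g : Ot) (a a' : A) (x : Ot ⊗[O] A) :
    brInner L ρt hadd hOlin hext g (a + a') x
      = brInner L ρt hadd hOlin hext g a x + brInner L ρt hadd hOlin hext g a' x := by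
  induction x using TensorProduct.induction_on with
  | zero => simp
  | tmul h b =>
      simp only [brInner_tmul, map_add, LinearMap.add_apply, hadd, Derivation.add_apply,
        mul_add, add_tmul, tmul_add]
      abel
  | add x y hx hy => simp only [map_add, hx, hy]; abel

include hLie in
lemma brInner_balance (f : O) (g : Ot) (a : A) (x : Ot ⊗[O] A) :
    brInner L ρt hadd hOlin hext (f • g) a x
      = brInner L ρt hadd hOlin hext g (f • a) x := by
  induction x using TensorProduct.induction_on with
  | zero => simp
  | tmul h b =>
      simp only [brInner_tmul, hOlin, Derivation.smul_apply, smul_eq_mul,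
        br_smul_left L f a b, Algebra.smul_def, rt_algmul L ρt hext,
        tmul_sub, sub_tmul, tmul_smul, smul_tmul', mul_add, add_tmul, mul_sub, sub_tmul]
      ring_nf
      abel
  | add x y hx hy => simp only [map_add, hx, hy]

/-- the bracket as an additive map -/
noncomputable def brAdd : Ot ⊗[O] A →+ Ot ⊗[O] A →+ Ot ⊗[O] A :=
  TensorProduct.liftAddHom
    (AddMonoidHom.mk'
      (fun g => AddMonoidHom.mk'
        (fun a => brInner L ρt hadd hOlin hext g a)
        (fun a a' => by ext x; exact brInner_add_mid L ρt hadd hOlin hext g a a' x))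
      (fun g g' => by ext a x; exact brInner_add_left L ρt hadd hOlin hext g g' a x))
    (fun f g a => by
      ext x
      exact brInner_balance L ρt hadd hOlin hLie hext f g a x)

@[simp] lemma brAdd_tmul (g : Ot) (a : A) (h : Ot) (b : A) :
    brAdd L ρt hadd hOlin hLie hext (g ⊗ₜ[O] a) (h ⊗ₜ[O] b)
      = (g * h) ⊗ₜ[O] L.bracket a b + (g * ρt a h) ⊗ₜ[O] b - (h * ρt b g) ⊗ₜ[O] a := rfl

include hLie in
lemma brAdd_ksmul_right (k : K) (x y : Ot ⊗[O] A) :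
    brAdd L ρt hadd hOlin hLie hext x (k • y) = k • brAdd L ρt hadd hOlin hLie hext x y := by
  induction x using TensorProduct.induction_on with
  | zero => simp
  | tmul g a =>
      induction y using TensorProduct.induction_on with
      | zero => simp
      | tmul h b =>
          simp only [smul_tmul', brAdd_tmul, Derivation.map_smul, mul_smul_comm,
            smul_mul_assoc, smul_add, smul_sub]
      | add y y' hy hy' => simp only [smul_add, map_add, hy, hy']
  | add x x' hx hx' =>
      simp only [map_add, AddMonoidHom.add_apply, hx, hx', smul_add]

include hLie in
lemma brAdd_ksmul_left (k : K) (x y : Ot ⊗[O] A) :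
    brAdd L ρt hadd hOlin hLie hext (k • x) y = k • brAdd L ρt hadd hOlin hLie hext x y := by
  induction x using TensorProduct.induction_on with
  | zero => simp
  | tmul g a =>
      induction y using TensorProduct.induction_on with
      | zero => simp
      | tmul h b =>
          simp only [smul_tmul', brAdd_tmul, Derivation.map_smul, mul_smul_comm,
            smul_mul_assoc, smul_add, smul_sub]
      | add y y' hy hy' => simp only [map_add, hy, hy', smul_add]
  | add x x' hx hx' =>
      simp only [smul_add, map_add, AddMonoidHom.add_apply, hx, hx']

/-- the bracket as a `K`-bilinear map -/
noncomputable def br : (Ot ⊗[O] A) →ₗ[K] (Ot ⊗[O] A) →ₗ[K] (Ot ⊗[O] A) where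
  toFun x :=
    { toFun := brAdd L ρt hadd hOlin hLie hext x
      map_add' := map_add _
      map_smul' := fun k y => brAdd_ksmul_right L ρt hadd hOlin hLie hext k x y }
  map_add' x x' := LinearMap.ext fun y => by
    simp only [LinearMap.coe_mk, AddHom.coe_mk, map_add, AddMonoidHom.add_apply,
      LinearMap.add_apply]
  map_smul' k x := LinearMap.ext fun y => by
    simp only [LinearMap.coe_mk, AddHom.coe_mk, RingHom.id_apply, LinearMap.smul_apply]
    exact brAdd_ksmul_left L ρt hadd hOlin hLie hext k x y

@[simp] lemma br_tmul (g : Ot) (a : A) (h : Ot) (b : A) :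
    br L ρt hadd hOlin hLie hext (g ⊗ₜ[O] a) (h ⊗ₜ[O] b)
      = (g * h) ⊗ₜ[O] L.bracket a b + (g * ρt a h) ⊗ₜ[O] b - (h * ρt b g) ⊗ₜ[O] a := rfl

lemma br_anti (x y : Ot ⊗[O] A) :
    br L ρt hadd hOlin hLie hext x y = - br L ρt hadd hOlin hLie hext y x := by
  induction x using TensorProduct.induction_on with
  | zero => simp
  | tmul g a =>
      induction y using TensorProduct.induction_on with
      | zero => simp
      | tmul h b =>
          rw [br_tmul, br_tmul, L.antisymm a b]
          simp only [tmul_neg, neg_tmul, neg_add, neg_sub, neg_neg]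
          ring_nf
          abel
      | add y y' hy hy' => simp only [map_add, LinearMap.add_apply, hy, hy', neg_add]
  | add x x' hx hx' =>
      simp only [map_add, LinearMap.add_apply, hx, hx', neg_add]

lemma br_leibniz (x y : Ot ⊗[O] A) (g : Ot) :
    br L ρt hadd hOlin hLie hext x (g • y)
      = g • br L ρt hadd hOlin hLie hext x y
        + (an ρt hadd hOlin x) g • y := by
  induction x using TensorProduct.induction_on with
  | zero => simp
  | tmul g0 a =>
      induction y using TensorProduct.induction_on with
      | zero => simp
      | tmul h b =>
          simp only [smul_tmul', smul_eq_mul, br_tmul, an_tmul, Derivation.smul_apply,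
            Derivation.leibniz, smul_add, smul_sub, mul_add, add_tmul]
          ring_nf
          abel
      | add y y' hy hy' =>
          simp only [smul_add, map_add, LinearMap.add_apply, hy, hy']
          abel
  | add x x' hx hx' =>
      simp only [map_add, LinearMap.add_apply, hx, hx', AddMonoidHom.add_apply,
        Derivation.add_apply, add_smul, smul_add]
      abel

lemma an_br (x y : Ot ⊗[O] A) :
    an ρt hadd hOlin (br L ρt hadd hOlin hLie hext x y)
      = ⁅an ρt hadd hOlin x, an ρt hadd hOlin y⁆ := by
  induction x using TensorProduct.induction_on with
  | zero => simp
  | tmul g a =>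
      induction y using TensorProduct.induction_on with
      | zero => simp
      | tmul h b =>
          rw [br_tmul]
          ext t
          simp only [map_add, map_sub, an_tmul, Derivation.commutator_apply,
            Derivation.smul_apply, Derivation.add_apply, Derivation.sub_apply,
            hLie, Derivation.leibniz, smul_eq_mul]
          ring
      | add y y' hy hy' =>
          simp only [map_add, LinearMap.add_apply, hy, hy', lie_add]
  | add x x' hx hx' =>
      simp only [map_add, LinearMap.add_apply, hx, hx', add_lie]

lemma br_jacobi (x y z : Ot ⊗[O] A) :
    br L ρt hadd hOlin hLie hext x (br L ρt hadd hOlin hLie hext y z)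
      = br L ρt hadd hOlin hLie hext (br L ρt hadd hOlin hLie hext x y) z
        + br L ρt hadd hOlin hLie hext y (br L ρt hadd hOlin hLie hext x z) := by
  induction x using TensorProduct.induction_on with
  | zero => simp
  | tmul g a =>
      induction y using TensorProduct.induction_on with
      | zero => simp
      | tmul h b =>
          induction z using TensorProduct.induction_on with
          | zero => simp
          | tmul k c =>
              rw [br_tmul L ρt hadd hOlin hLie hext h b k c,
                  br_tmul L ρt hadd hOlin hLie hext g a h b,
                  br_tmul L ρt hadd hOlin hLie hext g a k c]
              simp only [map_add, map_sub, LinearMap.add_apply, LinearMap.sub_apply]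
              simp only [br_tmul]
              simp only [L.jacobi a b c, hLie, Derivation.commutator_apply,
                Derivation.leibniz, smul_eq_mul, tmul_add, add_tmul, tmul_sub, sub_tmul,
                mul_add, add_mul, mul_sub, sub_mul]
              simp only [L.antisymm b a, tmul_neg, neg_tmul, mul_neg, neg_mul,
                sub_neg_eq_add, neg_neg, sub_eq_add_neg, neg_add]
              ring_nf
              abel
          | add z z' hz hz' =>
              simp only [map_add, LinearMap.add_apply, hz, hz']
              abel
      | add y y' hy hy' =>
          simp only [map_add, LinearMap.add_apply, hy, hy']
          abel
  | add x x' hx hx' =>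
      simp only [map_add, LinearMap.add_apply, hx, hx']
      abel

end Aux

/-- Let `Õ` be a commutative `K`-algebra which is an `O`-algebra (the
structure morphism `η = algebraMap O Õ`), and suppose `ρ̃ : A → Der_K(Õ)` is additive,
`O`-linear, a Lie algebra morphism, and extends the anchor `ρ` of `A`. Then `Õ ⊗_O A`
carries a Lie-Rinehart algebra structure over `Õ` whose bracket is well defined on pure
tensors by `[g ⊗ a, h ⊗ b] = (gh) ⊗ [a,b] + (g·ρ̃(a)(h)) ⊗ b − (h·ρ̃(b)(g)) ⊗ a`, whose
anchor is `ρ'(g ⊗ a) = g • ρ̃(a)`, and for which `a ↦ 1 ⊗ a` is a Lie algebra morphism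
compatible with `η` and the anchors. -/
theorem statement9 (K O A : Type*) [Field K] [CharZero K] [CommRing O] [Algebra K O]
    [AddCommGroup A] [Module K A] [Module O A] [IsScalarTower K O A]
    (L : LieRinehart K O A)
    (Ot : Type*) [CommRing Ot] [Algebra K Ot] [Algebra O Ot] [IsScalarTower K O Ot]
    (ρt : A → Derivation K Ot Ot)
    (hadd : ∀ a b : A, ρt (a + b) = ρt a + ρt b)
    (hOlin : ∀ (f : O) (a : A), ρt (f • a) = algebraMap O Ot f • ρt a)
    (hLie : ∀ a b : A, ρt (L.bracket a b) = ⁅ρt a, ρt b⁆)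
    (hext : ∀ (a : A) (f : O), ρt a (algebraMap O Ot f) = algebraMap O Ot (L.anchor a f)) :
    ∃ (br : (Ot ⊗[O] A) →ₗ[K] (Ot ⊗[O] A) →ₗ[K] (Ot ⊗[O] A))
      (an : (Ot ⊗[O] A) →ₗ[Ot] Derivation K Ot Ot),
      -- the bracket is well defined by the formula on pure tensors:
      (∀ (g h : Ot) (a b : A),
        br (g ⊗ₜ[O] a) (h ⊗ₜ[O] b)
          = (g * h) ⊗ₜ[O] L.bracket a b + (g * ρt a h) ⊗ₜ[O] b - (h * ρt b g) ⊗ₜ[O] a) ∧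
      -- the anchor on pure tensors:
      (∀ (g : Ot) (a : A), an (g ⊗ₜ[O] a) = g • ρt a) ∧
      -- Lie algebra axioms:
      (∀ x y, br x y = - br y x) ∧
      (∀ x y z, br x (br y z) = br (br x y) z + br y (br x z)) ∧
      -- Leibniz identity with respect to the anchor:
      (∀ x y (g : Ot), br x (g • y) = g • br x y + (an x) g • y) ∧
      -- the anchor is a Lie algebra morphism:
      (∀ x y, an (br x y) = ⁅an x, an y⁆) ∧
      -- a ↦ 1 ⊗ a is a Lie algebra morphism compatible with η and the anchors:
      (∀ a b : A, br ((1 : Ot) ⊗ₜ[O] a) ((1 : Ot) ⊗ₜ[O] b) = (1 : Ot) ⊗ₜ[O] L.bracket a b) ∧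
      (∀ (f : O) (a : A),
        (1 : Ot) ⊗ₜ[O] (f • a) = algebraMap O Ot f • ((1 : Ot) ⊗ₜ[O] a)) ∧
      (∀ a : A, an ((1 : Ot) ⊗ₜ[O] a) = ρt a) := by
  refine ⟨br L ρt hadd hOlin hLie hext, an ρt hadd hOlin,
    (fun g h a b => br_tmul L ρt hadd hOlin hLie hext g a h b),
    (fun g a => an_tmul ρt hadd hOlin g a),
    br_anti L ρt hadd hOlin hLie hext,
    br_jacobi L ρt hadd hOlin hLie hext,
    br_leibniz L ρt hadd hOlin hLie hext,
    an_br L ρt hadd hOlin hLie hext,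
    ?_, ?_, ?_⟩
  · intro a b
    rw [br_tmul]
    simp [Derivation.map_one_eq_zero]
  · intro f a
    rw [tmul_smul, smul_tmul', smul_tmul', Algebra.smul_def, smul_eq_mul, mul_one]
  · intro a
    rw [an_tmul, one_smul]
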